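/- arXiv:2504.16657 — 2 statements merged into one kernel-verified Lean document; each statement's English description precedes it below -/
import Mathlib

section
/- Let p ≥ 1 and let (X, d, m) be a metric measure space whose measure m is β-doubling for some β > 1, and set N = log β / log 2. Assume that the upper density function satisfies θ_N^+(x) ≤ b for all x ∈ X, for some constant b > 0. Then for every Lipschitz function u : X → ℝ with bounded support, limsup_{λ→+∞} λ^p · (m × m)(E_{λ,u}) ≤ 2 b ∫_X (Lip u(x))^p dm(x), where E_{λ,u} = {(x,y) ∈ X × X : x ≠ y, |u(x) − u(y)| ≥ λ · d(x,y)^{N/p + 1}}. -/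
/-!
Doubling says that `r ↦ μ (B_r(x)) / r ^ N` does not increase when `r` is doubled, so this ratio
is bounded by its upper limit at `0`: `μ (B_r(x)) ≤ b r ^ N` for every `r > 0`. If
`|u x - u y| ≤ L d(x, y)` on the section `E_λ(x)`, every `y` in it satisfies
`λ d(x, y) ^ (N / p) ≤ L`, so the section lies in the ball of radius `(L' / λ) ^ (p / N)` for any
`L' > L`, whence `λ ^ p μ (E_λ(x)) ≤ b L' ^ p`. With `L` the Lipschitz constant of `u` this is an
integrable bound supported near `supp u`; as `λ → ∞` the sections shrink to `x`, where `L` may be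
taken just above `Lip u(x)`. Reverse Fatou gives the estimate, even with `b` in place of `2 b`.
-/

open MeasureTheory Filter Metric Set Topology

/-- The lower pointwise Lipschitz constant
`lip u (x) = liminf_{r → 0+} sup_{y ∈ B_r(x)} |u y - u x| / r`. -/
noncomputable def lipLower {X : Type*} [MetricSpace X] (u : X → ℝ) (x : X) : ℝ :=
  Filter.liminf (fun r : ℝ => ⨆ y ∈ Metric.ball x r, |u y - u x| / r) (𝓝[>] (0 : ℝ))

/-- The upper pointwise Lipschitz constant
`Lip u (x) = limsup_{r → 0+} sup_{y ∈ B_r(x)} |u y - u x| / r`. -/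
noncomputable def lipUpper {X : Type*} [MetricSpace X] (u : X → ℝ) (x : X) : ℝ :=
  Filter.limsup (fun r : ℝ => ⨆ y ∈ Metric.ball x r, |u y - u x| / r) (𝓝[>] (0 : ℝ))

/-- The set `E_{λ,u} = {(x,y) : x ≠ y, |u x - u y| ≥ λ d(x,y)^{N/p+1}}`. -/
def BVYset {X : Type*} [MetricSpace X] (u : X → ℝ) (N p lam : ℝ) : Set (X × X) :=
  {q : X × X | q.1 ≠ q.2 ∧ lam * dist q.1 q.2 ^ (N / p + 1) ≤ |u q.1 - u q.2|}

open scoped ENNReal NNReal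

theorem le_limsup_nhdsGT_zero_of_two_mul_le {α : Type*} [CompleteLattice α] {f : ℝ → α}
    (hf : ∀ r, 0 < r → f (2 * r) ≤ f r) {r : ℝ} (hr : 0 < r) :
    f r ≤ limsup f (𝓝[>] 0) := by
  have hle : ∀ k : ℕ, f r ≤ f (r / 2 ^ k) := by
    intro k
    induction k with
    | zero => simp
    | succ k ih =>
      calc f r ≤ f (r / 2 ^ k) := ih
        _ = f (2 * (r / 2 ^ (k + 1))) := by rw [pow_succ]; field_simp
        _ ≤ f (r / 2 ^ (k + 1)) := hf _ (by positivity)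
  have hlim : Tendsto (fun k : ℕ => r / 2 ^ k) atTop (𝓝[>] 0) :=
    tendsto_nhdsWithin_iff.mpr ⟨tendsto_const_nhds.div_atTop
      (tendsto_pow_atTop_atTop_of_one_lt one_lt_two),
      .of_forall fun k => mem_Ioi.mpr (by positivity)⟩
  exact le_limsup_of_frequently_le (hlim.frequently (.of_forall hle))

theorem measure_ball_le_of_limsup_le {X : Type*} [PseudoMetricSpace X] [MeasurableSpace X]
    {μ : Measure X} {N b r : ℝ} {x : X}
    (hdbl : ∀ r, 0 < r → μ (ball x (2 * r)) ≤ ENNReal.ofReal (2 ^ N) * μ (ball x r))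
    (hθ : limsup (fun r : ℝ => μ (ball x r) / ENNReal.ofReal (r ^ N)) (𝓝[>] 0)
      ≤ ENNReal.ofReal b)
    (hr : 0 < r) : μ (ball x r) ≤ ENNReal.ofReal b * ENNReal.ofReal (r ^ N) := by
  have hratio : ∀ s, 0 < s → μ (ball x (2 * s)) / ENNReal.ofReal ((2 * s) ^ N)
      ≤ μ (ball x s) / ENNReal.ofReal (s ^ N) := by
    intro s hs
    calc μ (ball x (2 * s)) / ENNReal.ofReal ((2 * s) ^ N)
        ≤ ENNReal.ofReal (2 ^ N) * μ (ball x s) / ENNReal.ofReal ((2 * s) ^ N) := by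
          gcongr; exact hdbl s hs
      _ = μ (ball x s) / ENNReal.ofReal (s ^ N) := by
          rw [Real.mul_rpow zero_le_two hs.le, ENNReal.ofReal_mul (by positivity),
            ENNReal.mul_div_mul_left _ _ (ENNReal.ofReal_pos.mpr (by positivity)).ne'
              ENNReal.ofReal_ne_top]
  have hle := (le_limsup_nhdsGT_zero_of_two_mul_le hratio hr).trans hθ
  rwa [ENNReal.div_le_iff (by positivity) ENNReal.ofReal_ne_top] at hle

theorem limsup_lintegral_le_of_eventually_le {α ι : Type*} [MeasurableSpace α] {μ : Measure α}
    {l : Filter ι} [l.NeBot] [l.IsCountablyGenerated] {f : ι → α → ℝ≥0∞} (g : α → ℝ≥0∞)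
    (hf_meas : ∀ i, Measurable (f i)) (h_bound : ∀ᶠ i in l, f i ≤ᵐ[μ] g)
    (h_fin : ∫⁻ a, g a ∂μ ≠ ∞) :
    limsup (fun i => ∫⁻ a, f i a ∂μ) l ≤ ∫⁻ a, limsup (fun i => f i a) l ∂μ := by
  obtain ⟨x, hx_lim, hx⟩ := exists_seq_tendsto_limsup (f := l) (u := fun i => ∫⁻ a, f i a ∂μ)
  obtain ⟨n₀, hn₀⟩ := eventually_atTop.mp (hx.eventually h_bound)
  have hy : Tendsto (fun n => x (n + n₀)) atTop l := hx.comp (tendsto_add_atTop_nat n₀)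
  calc limsup (fun i => ∫⁻ a, f i a ∂μ) l
      = limsup (fun n => ∫⁻ a, f (x (n + n₀)) a ∂μ) atTop :=
        ((hx_lim.comp (tendsto_add_atTop_nat n₀)).limsup_eq).symm
    _ ≤ ∫⁻ a, limsup (fun n => f (x (n + n₀)) a) atTop ∂μ :=
        limsup_lintegral_le g (fun _ => hf_meas _) (fun n => hn₀ _ (Nat.le_add_left _ _)) h_fin
    _ ≤ ∫⁻ a, limsup (fun i => f i a) l ∂μ :=
        lintegral_mono fun a => (limsup_comp (fun i => f i a) _ atTop).trans_le
          (limsup_le_limsup_of_le hy)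

noncomputable def maxSlope {X : Type*} [MetricSpace X] (u : X → ℝ) (x : X) (r : ℝ) : ℝ :=
  ⨆ y ∈ ball x r, |u y - u x| / r

section maxSlope

variable {X : Type*} [MetricSpace X] {u : X → ℝ} {K : ℝ≥0} {x y : X} {r : ℝ}

theorem lipUpper_eq_limsup_maxSlope : lipUpper u x = limsup (maxSlope u x) (𝓝[>] 0) := rfl

theorem LipschitzWith.abs_sub_le (hu : LipschitzWith K u) (x y : X) :
    |u x - u y| ≤ K * dist x y := by
  simpa only [Real.dist_eq] using hu.dist_le_mul x y

theorem div_le_of_mem_ball (hu : LipschitzWith K u) (hy : y ∈ ball x r) :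
    |u y - u x| / r ≤ K := by
  rw [div_le_iff₀ (pos_of_mem_ball hy)]
  exact (hu.abs_sub_le y x).trans (by gcongr; exact (mem_ball.mp hy).le)

theorem maxSlope_le (hu : LipschitzWith K u) : maxSlope u x r ≤ K :=
  Real.iSup_le (fun _ => Real.iSup_le (fun hy => div_le_of_mem_ball hu hy) K.2) K.2

theorem div_le_maxSlope (hu : LipschitzWith K u) (hy : y ∈ ball x r) :
    |u y - u x| / r ≤ maxSlope u x r := by
  refine (ciSup_pos (f := fun _ => |u y - u x| / r) hy).symm.trans_le
    (le_ciSup (f := fun z => ⨆ _ : z ∈ ball x r, |u z - u x| / r) ⟨K, ?_⟩ y)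
  rintro _ ⟨z, rfl⟩
  exact Real.iSup_le (fun hz => div_le_of_mem_ball hu hz) K.2

theorem abs_sub_le_of_maxSlope_le (hu : LipschitzWith K u) {s c : ℝ}
    (hs : ∀ r ∈ Ioo 0 s, maxSlope u x r ≤ c) (hy : dist x y < s) :
    |u x - u y| ≤ c * dist x y := by
  rw [abs_sub_comm]
  refine ge_of_tendsto (((continuous_const_mul c).tendsto _).mono_left
    (nhdsWithin_le_nhds (s := Ioi (dist x y)))) ?_
  filter_upwards [Ioo_mem_nhdsGT hy] with r hr
  have hr₀ : 0 < r := dist_nonneg.trans_lt hr.1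
  have hyr : y ∈ ball x r := mem_ball'.mpr hr.1
  rw [← div_le_iff₀ hr₀]
  exact (div_le_maxSlope hu hyr).trans (hs r ⟨hr₀, hr.2⟩)

end maxSlope

section BVYset

variable {X : Type*} [MetricSpace X] {u : X → ℝ} {N p lam L L' : ℝ} {x y : X}

theorem mul_dist_rpow_le_of_mem_BVYset (hxy : (x, y) ∈ BVYset u N p lam)
    (hL : |u x - u y| ≤ L * dist x y) : lam * dist x y ^ (N / p) ≤ L := by
  have hd : 0 < dist x y := dist_pos.mpr hxy.1
  have h := hxy.2.trans hL
  rw [Real.rpow_add hd, Real.rpow_one, ← mul_assoc] at h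
  exact le_of_mul_le_mul_right h hd

theorem dist_lt_of_mem_BVYset (hp : 0 < p) (hN : 0 < N) (hlam : 0 < lam)
    (hxy : (x, y) ∈ BVYset u N p lam) (hL : |u x - u y| ≤ L * dist x y) (hLL' : L < L') :
    dist x y < (L' / lam) ^ (p / N) := by
  have h := mul_dist_rpow_le_of_mem_BVYset hxy hL
  have hlt : dist x y ^ (N / p) < L' / lam := by
    rw [lt_div_iff₀ hlam, mul_comm]; linarith
  rw [← inv_div N p, Real.lt_rpow_inv_iff_of_pos dist_nonneg
    ((Real.rpow_nonneg dist_nonneg _).trans hlt.le) (by positivity)]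
  exact hlt

theorem mem_thickening_support_of_mem_BVYset {δ : ℝ} (hlam : 0 < lam)
    (hxy : (x, y) ∈ BVYset u N p lam) (hδ : dist x y < δ) :
    x ∈ thickening δ (Function.support u) := by
  have hne : u x ≠ u y := by
    intro h
    have := hxy.2
    rw [h, sub_self, abs_zero] at this
    exact this.not_gt (mul_pos hlam (Real.rpow_pos_of_pos (dist_pos.mpr hxy.1) _))
  rw [mem_thickening_iff]
  by_cases hx : u x = 0
  · exact ⟨y, fun hy => hne (hx.trans hy.symm), hδ⟩
  · exact ⟨x, hx, (dist_self x).symm ▸ dist_nonneg.trans_lt hδ⟩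

variable [MeasurableSpace X] {μ : Measure X} {b : ℝ}

theorem rpow_mul_measure_section_le
    (hdens : ∀ r, 0 < r → μ (ball x r) ≤ ENNReal.ofReal b * ENNReal.ofReal (r ^ N))
    (hp : 0 < p) (hN : 0 < N) (hlam : 0 < lam)
    (hL : ∀ y, (x, y) ∈ BVYset u N p lam → |u x - u y| ≤ L * dist x y) (hLL' : L < L') :
    ENNReal.ofReal (lam ^ p) * μ (Prod.mk x ⁻¹' BVYset u N p lam)
      ≤ ENNReal.ofReal b * ENNReal.ofReal (L' ^ p) := by
  rcases (Prod.mk x ⁻¹' BVYset u N p lam).eq_empty_or_nonempty with hempty | ⟨y, hy⟩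
  · simp [hempty]
  have hL' : 0 < L' := by
    have := mul_dist_rpow_le_of_mem_BVYset hy (hL y hy)
    have : 0 < lam * dist x y ^ (N / p) :=
      mul_pos hlam (Real.rpow_pos_of_pos (dist_pos.mpr hy.1) _)
    linarith
  set ρ := (L' / lam) ^ (p / N)
  have hsub : Prod.mk x ⁻¹' BVYset u N p lam ⊆ ball x ρ := fun z hz =>
    mem_ball'.mpr (dist_lt_of_mem_BVYset hp hN hlam hz (hL z hz) hLL')
  have hscale : lam ^ p * ρ ^ N = L' ^ p := by
    rw [← Real.rpow_mul (by positivity), div_mul_cancel₀ _ hN.ne',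
      Real.div_rpow hL'.le hlam.le, mul_div_cancel₀ _ (by positivity)]
  calc ENNReal.ofReal (lam ^ p) * μ (Prod.mk x ⁻¹' BVYset u N p lam)
      ≤ ENNReal.ofReal (lam ^ p) * (ENNReal.ofReal b * ENNReal.ofReal (ρ ^ N)) := by
        gcongr
        exact (measure_mono hsub).trans (hdens ρ (by positivity))
    _ = ENNReal.ofReal b * ENNReal.ofReal (L' ^ p) := by
        rw [← hscale, ENNReal.ofReal_mul (by positivity)]
        ring

end BVYset

section sections

variable {X : Type*} [MetricSpace X] [MeasurableSpace X] {μ : Measure X} {u : X → ℝ}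
  {K : ℝ≥0} {N p b : ℝ}

theorem limsup_rpow_mul_measure_section_le (hu : LipschitzWith K u) (hp : 0 < p) (hN : 0 < N)
    {x : X} (hdens : ∀ r, 0 < r → μ (ball x r) ≤ ENNReal.ofReal b * ENNReal.ofReal (r ^ N)) :
    limsup (fun lam : ℝ => ENNReal.ofReal (lam ^ p) * μ (Prod.mk x ⁻¹' BVYset u N p lam)) atTop
      ≤ ENNReal.ofReal b * ENNReal.ofReal (lipUpper u x ^ p) := by
  have hbound : ∀ W > lipUpper u x,
      limsup (fun lam : ℝ => ENNReal.ofReal (lam ^ p) * μ (Prod.mk x ⁻¹' BVYset u N p lam))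
        atTop ≤ ENNReal.ofReal b * ENNReal.ofReal (W ^ p) := by
    intro W hW
    obtain ⟨W', hW', hW'W⟩ := exists_between hW
    rw [lipUpper_eq_limsup_maxSlope] at hW'
    have hslope : ∀ᶠ r in 𝓝[>] 0, maxSlope u x r < W' :=
      eventually_lt_of_limsup_lt hW' (isBoundedUnder_of_eventually_le (a := (K : ℝ))
        (.of_forall fun _ => maxSlope_le hu))
    obtain ⟨s, hs, hsW'⟩ := mem_nhdsGT_iff_exists_Ioo_subset.mp hslope
    have hshrink : Tendsto (fun lam : ℝ => ((K + 1) / lam) ^ (p / N)) atTop (𝓝 0) := by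
      simpa [Real.zero_rpow (div_pos hp hN).ne'] using
        (tendsto_const_nhds.div_atTop tendsto_id).rpow_const (Or.inr (div_pos hp hN).le)
    refine limsup_le_of_le (by isBoundedDefault) ?_
    filter_upwards [hshrink.eventually (gt_mem_nhds (mem_Ioi.mp hs)), eventually_gt_atTop 0]
      with lam hlam_s hlam
    refine rpow_mul_measure_section_le hdens hp hN hlam (fun y hy => ?_) hW'W
    exact abs_sub_le_of_maxSlope_le hu (fun r hr => (hsW' hr).le)
      ((dist_lt_of_mem_BVYset hp hN hlam hy (hu.abs_sub_le x y) (lt_add_one _)).trans hlam_s)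
  have hcont : Tendsto (fun W : ℝ => ENNReal.ofReal b * ENNReal.ofReal (W ^ p))
      (𝓝[>] (lipUpper u x)) (𝓝 (ENNReal.ofReal b * ENNReal.ofReal (lipUpper u x ^ p))) :=
    ENNReal.Tendsto.const_mul (ENNReal.tendsto_ofReal
      ((Real.continuousAt_rpow_const _ _ (Or.inr hp.le)).tendsto.mono_left nhdsWithin_le_nhds))
      (Or.inr ENNReal.ofReal_ne_top)
  exact ge_of_tendsto hcont (eventually_nhdsWithin_of_forall hbound)

theorem rpow_mul_measure_section_le_indicator (hu : LipschitzWith K u) (hp : 0 < p)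
    (hN : 0 < N)
    (hdens : ∀ x r, 0 < r → μ (ball x r) ≤ ENNReal.ofReal b * ENNReal.ofReal (r ^ N))
    {lam : ℝ} (hlam : 1 ≤ lam) (x : X) :
    ENNReal.ofReal (lam ^ p) * μ (Prod.mk x ⁻¹' BVYset u N p lam)
      ≤ (thickening ((K + 1) ^ (p / N)) (Function.support u)).indicator
          (fun _ => ENNReal.ofReal b * ENNReal.ofReal ((K + 1) ^ p)) x := by
  have hlam₀ : 0 < lam := one_pos.trans_le hlam
  have hdist : ∀ y, (x, y) ∈ BVYset u N p lam → dist x y < ((K + 1) / lam) ^ (p / N) :=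
    fun y hy => dist_lt_of_mem_BVYset hp hN hlam₀ hy (hu.abs_sub_le x y) (lt_add_one _)
  by_cases hx : x ∈ thickening ((K + 1) ^ (p / N)) (Function.support u)
  · rw [indicator_of_mem hx]
    exact rpow_mul_measure_section_le (hdens x) hp hN hlam₀
      (fun y _ => hu.abs_sub_le x y) (lt_add_one _)
  · have hempty : Prod.mk x ⁻¹' BVYset u N p lam = ∅ :=
      eq_empty_of_forall_notMem fun y hy => hx <| mem_thickening_support_of_mem_BVYset hlam₀ hy
        ((hdist y hy).trans_le (Real.rpow_le_rpow (by positivity)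
          (div_le_self (by positivity) hlam) (div_pos hp hN).le))
    simp [hempty]

end sections

theorem measurableSet_BVYset {X : Type*} [MetricSpace X] [TopologicalSpace.SeparableSpace X]
    [MeasurableSpace X] [BorelSpace X] {u : X → ℝ} (hu : Measurable u) (N p lam : ℝ) :
    MeasurableSet (BVYset u N p lam) :=
  isClosed_diagonal.measurableSet.compl.inter <| measurableSet_le
    (measurable_const.mul (measurable_dist.pow_const _))
    ((hu.comp measurable_fst).sub (hu.comp measurable_snd)).abs

theorem measure_lt_top_of_isBounded {X : Type*} [PseudoMetricSpace X] [MeasurableSpace X]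
    {μ : Measure X} (hball : ∀ x r, 0 < r → μ (ball x r) < ∞) {s : Set X}
    (hs : Bornology.IsBounded s) : μ s < ∞ := by
  rcases s.eq_empty_or_nonempty with rfl | ⟨c, -⟩
  · simp
  obtain ⟨r, hr, hsub⟩ := hs.subset_ball_lt 0 c
  exact (measure_mono hsub).trans_lt (hball c r hr)

theorem upper_bound_estimate_general
    {X : Type*} [MetricSpace X] [TopologicalSpace.SeparableSpace X]
    [MeasurableSpace X] [BorelSpace X]
    (μ : Measure X) [SigmaFinite μ]
    (p β : ℝ) (hp : 1 ≤ p) (hβ : 1 < β)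
    (hdbl : ∀ (x : X) (r : ℝ), 0 < r →
      μ (Metric.ball x (2 * r)) ≤ ENNReal.ofReal β * μ (Metric.ball x r))
    (N : ℝ) (hN : N = Real.log β / Real.log 2)
    (b : ℝ)
    (hθ : ∀ x : X,
      Filter.limsup (fun r : ℝ => μ (Metric.ball x r) / ENNReal.ofReal (r ^ N)) (𝓝[>] (0 : ℝ))
        ≤ ENNReal.ofReal b)
    (u : X → ℝ) (hu : ∃ L : NNReal, LipschitzWith L u)
    (hsupp : Bornology.IsBounded (Function.support u)) :
    Filter.limsup
        (fun lam : ℝ => ENNReal.ofReal (lam ^ p) * (μ.prod μ) (BVYset u N p lam))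
        Filter.atTop
      ≤ ENNReal.ofReal (2 * b) * ∫⁻ x, ENNReal.ofReal (lipUpper u x ^ p) ∂μ := by
  obtain ⟨K, hK⟩ := hu
  have hp₀ : 0 < p := one_pos.trans_le hp
  have hN₀ : 0 < N := hN ▸ div_pos (Real.log_pos hβ) (Real.log_pos one_lt_two)
  have htwo : (2 : ℝ) ^ N = β := hN ▸ Real.rpow_logb two_pos (by norm_num) (by linarith)
  have hdens : ∀ x r, 0 < r → μ (ball x r) ≤ ENNReal.ofReal b * ENNReal.ofReal (r ^ N) :=
    fun x _ hr => measure_ball_le_of_limsup_le (htwo ▸ hdbl x) (hθ x) hr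
  set T := thickening ((K + 1) ^ (p / N)) (Function.support u)
  have hT : μ T < ∞ := measure_lt_top_of_isBounded
    (fun x r hr => (hdens x r hr).trans_lt (by finiteness)) hsupp.thickening
  calc limsup (fun lam : ℝ => ENNReal.ofReal (lam ^ p) * (μ.prod μ) (BVYset u N p lam)) atTop
      = limsup (fun lam : ℝ => ∫⁻ x, ENNReal.ofReal (lam ^ p)
          * μ (Prod.mk x ⁻¹' BVYset u N p lam) ∂μ) atTop := by
        simp_rw [Measure.prod_apply (measurableSet_BVYset hK.continuous.measurable N p _),
          lintegral_const_mul' _ _ ENNReal.ofReal_ne_top]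
    _ ≤ ∫⁻ x, limsup (fun lam : ℝ => ENNReal.ofReal (lam ^ p)
          * μ (Prod.mk x ⁻¹' BVYset u N p lam)) atTop ∂μ := by
        refine limsup_lintegral_le_of_eventually_le
          (T.indicator fun _ => ENNReal.ofReal b * ENNReal.ofReal ((K + 1) ^ p))
          (fun lam => (measurable_measure_prodMk_left
            (measurableSet_BVYset hK.continuous.measurable N p lam)).const_mul _) ?_ ?_
        · filter_upwards [eventually_ge_atTop 1] with lam hlam
          exact .of_forall (rpow_mul_measure_section_le_indicator hK hp₀ hN₀ hdens hlam)
        · rw [lintegral_indicator_const isOpen_thickening.measurableSet]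
          exact ENNReal.mul_ne_top (by finiteness) hT.ne
    _ ≤ ∫⁻ x, ENNReal.ofReal b * ENNReal.ofReal (lipUpper u x ^ p) ∂μ :=
        lintegral_mono fun x => limsup_rpow_mul_measure_section_le hK hp₀ hN₀ (hdens x)
    _ ≤ ENNReal.ofReal (2 * b) * ∫⁻ x, ENNReal.ofReal (lipUpper u x ^ p) ∂μ := by
        rw [lintegral_const_mul' _ _ ENNReal.ofReal_ne_top]
        refine mul_le_mul_left (ENNReal.ofReal_le_ofReal_iff'.mpr ?_) _
        exact (le_or_gt 0 b).imp (fun h => by linarith) le_of_lt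

theorem upper_bound_estimate
    {X : Type*} [MetricSpace X] [CompleteSpace X] [TopologicalSpace.SeparableSpace X]
    [MeasurableSpace X] [BorelSpace X]
    (μ : Measure X) [SigmaFinite μ] [IsLocallyFiniteMeasure μ] [μ.InnerRegular]
    [μ.IsOpenPosMeasure]
    (p β : ℝ) (hp : 1 ≤ p) (hβ : 1 < β)
    (hdbl : ∀ (x : X) (r : ℝ), 0 < r →
      μ (Metric.ball x (2 * r)) ≤ ENNReal.ofReal β * μ (Metric.ball x r))
    (N : ℝ) (hN : N = Real.log β / Real.log 2)
    (b : ℝ) (hb : 0 < b)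
    (hθ : ∀ x : X,
      Filter.limsup (fun r : ℝ => μ (Metric.ball x r) / ENNReal.ofReal (r ^ N)) (𝓝[>] (0 : ℝ))
        ≤ ENNReal.ofReal b)
    (u : X → ℝ) (hu : ∃ L : NNReal, LipschitzWith L u)
    (hsupp : Bornology.IsBounded (Function.support u)) :
    Filter.limsup
        (fun lam : ℝ => ENNReal.ofReal (lam ^ p) * (μ.prod μ) (BVYset u N p lam))
        Filter.atTop
      ≤ ENNReal.ofReal (2 * b) * ∫⁻ x, ENNReal.ofReal (lipUpper u x ^ p) ∂μ :=
  upper_bound_estimate_general μ p β hp hβ hdbl N hN b hθ u hu hsupp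
end

section
/- Let (X, d) be a metric space and let u : X → ℝ be a Lipschitz function. Then the lower pointwise Lipschitz constant lip u : X → [0, +∞] and the upper pointwise Lipschitz constant Lip u : X → [0, +∞] are Borel measurable functions. -/
open MeasureTheory Filter Metric Set Topology

/-!
For `r > 0` the function `x ↦ sup_{y ∈ B_r(x)} |u y - u x| / r` is lower semicontinuous, hence
Borel. For fixed `x` it is left-continuous in `r`: the supremum over the open ball `B_r(x)` is
approached by points of smaller balls, and `B_s(x) ⊆ B_r(x)` bounds it at `s < r` by `r / s` times
its value at `r`. Hence `lip u` and `Lip u` are the `liminf` and `limsup` along rational radii,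
countable operations on Borel functions.
-/

-- `lipLower u x` and `lipUpper u x` are by definition the `liminf` and `limsup` of
-- `lipAtScale u · x` as the radius tends to `0⁺`.
noncomputable def lipAtScale {X : Type*} [PseudoMetricSpace X] (u : X → ℝ) (r : ℝ) (x : X) :
    ℝ :=
  ⨆ y ∈ ball x r, |u y - u x| / r

section RationalRadii

theorem frequently_ratCast_nhdsGT_zero {p : ℝ → Prop}
    (h : ∃ᶠ r in 𝓝[>] 0, ∀ᶠ s in 𝓝[<] r, p s) :
    ∃ᶠ q : ℚ in comap (↑) (𝓝[>] (0 : ℝ)), p q := by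
  rw [((nhdsGT_basis (0 : ℝ)).comap _).frequently_iff]
  intro δ hδ
  obtain ⟨r, ⟨hr0, hrδ⟩, hr⟩ := (nhdsGT_basis (0 : ℝ)).frequently_iff.mp h δ hδ
  obtain ⟨a, har, hsub⟩ := mem_nhdsLT_iff_exists_Ioo_subset.mp (hr.and (Ioo_mem_nhdsLT hr0))
  obtain ⟨q, haq, hqr⟩ := exists_rat_btwn (mem_Iio.mp har)
  obtain ⟨hpq, hq0, -⟩ := hsub ⟨haq, hqr⟩
  exact ⟨q, ⟨hq0, hqr.trans hrδ⟩, hpq⟩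

variable {α : Type*} [ConditionallyCompleteLinearOrder α] [TopologicalSpace α] [OrderTopology α]
  [DenselyOrdered α] {f : ℝ → α}

theorem liminf_comp_ratCast_nhdsGT_zero (hf : ∀ r > 0, ContinuousWithinAt f (Iio r) r)
    (hf_le : IsBoundedUnder (· ≤ ·) (𝓝[>] 0) f)
    (hf_ge : IsBoundedUnder (· ≥ ·) (𝓝[>] 0) f) :
    liminf (fun q : ℚ => f q) (comap ((↑) : ℚ → ℝ) (𝓝[>] 0)) = liminf f (𝓝[>] 0) := by
  have hcast : Tendsto ((↑) : ℚ → ℝ) (comap (↑) (𝓝[>] (0 : ℝ))) (𝓝[>] 0) :=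
    tendsto_comap
  have : (comap ((↑) : ℚ → ℝ) (𝓝[>] 0)).NeBot := by
    rw [← frequently_true_iff_neBot]
    exact frequently_ratCast_nhdsGT_zero (.of_forall fun _ => .of_forall fun _ => trivial)
  apply le_antisymm
  · refine le_of_forall_gt_imp_ge_of_dense fun a ha => liminf_le_of_frequently_le ?_
      (hcast.isBoundedUnder_comp hf_ge)
    have hlt := (frequently_lt_of_liminf_lt hf_le.isCoboundedUnder_ge ha).and_eventually
      self_mem_nhdsWithin
    have hlt_rat : ∃ᶠ q : ℚ in comap (↑) (𝓝[>] (0 : ℝ)), f q < a :=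
      frequently_ratCast_nhdsGT_zero (hlt.mono fun r hr => hf r hr.2 (gt_mem_nhds hr.1))
    exact hlt_rat.mono fun _ => le_of_lt
  · exact hcast.liminf_le_liminf_comp (hf_le.mono hcast).isCoboundedUnder_ge hf_ge

theorem limsup_comp_ratCast_nhdsGT_zero (hf : ∀ r > 0, ContinuousWithinAt f (Iio r) r)
    (hf_le : IsBoundedUnder (· ≤ ·) (𝓝[>] 0) f)
    (hf_ge : IsBoundedUnder (· ≥ ·) (𝓝[>] 0) f) :
    limsup (fun q : ℚ => f q) (comap ((↑) : ℚ → ℝ) (𝓝[>] 0)) = limsup f (𝓝[>] 0) :=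
  liminf_comp_ratCast_nhdsGT_zero (α := αᵒᵈ) hf hf_ge hf_le

end RationalRadii

section CountablyGenerated

variable {ι α δ : Type*} [Countable ι] {v : Filter ι} [v.IsCountablyGenerated]
  [ConditionallyCompleteLinearOrder α] [TopologicalSpace α] [OrderTopology α]
  [SecondCountableTopology α] [MeasurableSpace α] [BorelSpace α] [MeasurableSpace δ]
  {f : ι → δ → α}

theorem Measurable.liminf_of_isCountablyGenerated (hf : ∀ i, Measurable (f i)) :
    Measurable fun x => Filter.liminf (f · x) v :=
  have ⟨_, hs⟩ := v.exists_antitone_basis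
  .liminf' hf ⟨hs.toHasBasis, to_countable _⟩ fun _ => to_countable _

theorem Measurable.limsup_of_isCountablyGenerated (hf : ∀ i, Measurable (f i)) :
    Measurable fun x => Filter.limsup (f · x) v :=
  .liminf_of_isCountablyGenerated (α := αᵒᵈ) hf

end CountablyGenerated

section LipAtScale

variable {X : Type*} [PseudoMetricSpace X] {u : X → ℝ} {L : NNReal} {r s a : ℝ} {x y : X}

theorem LipschitzWith.abs_sub_div_le (hu : LipschitzWith L u) (hr : 0 < r) (hy : y ∈ ball x r) :
    |u y - u x| / r ≤ L := by
  rw [div_le_iff₀ hr, ← Real.dist_eq]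
  exact (hu.dist_le_mul y x).trans (mul_le_mul_of_nonneg_left (mem_ball.mp hy).le L.2)

theorem lipAtScale_nonneg (hr : 0 ≤ r) : 0 ≤ lipAtScale u r x :=
  Real.iSup_nonneg fun _ => Real.iSup_nonneg fun _ => div_nonneg (abs_nonneg _) hr

theorem lipAtScale_of_nonpos (hr : r ≤ 0) : lipAtScale u r = 0 := by
  ext x
  simp [lipAtScale, ball_eq_empty.mpr hr]

theorem LipschitzWith.lipAtScale_le (hu : LipschitzWith L u) (hr : 0 < r) :
    lipAtScale u r x ≤ L :=
  Real.iSup_le (fun _ => Real.iSup_le (hu.abs_sub_div_le hr) L.2) L.2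

theorem LipschitzWith.abs_sub_div_le_lipAtScale (hu : LipschitzWith L u) (hr : 0 < r)
    (hy : y ∈ ball x r) : |u y - u x| / r ≤ lipAtScale u r x := by
  refine le_ciSup₂ (f := fun y (_ : y ∈ ball x r) => |u y - u x| / r) ⟨L, ?_⟩ y hy
  rintro _ ⟨_, ⟨y, rfl⟩, hy, rfl⟩
  exact hu.abs_sub_div_le hr hy

theorem exists_lt_abs_sub_div_of_lt_lipAtScale (hr : 0 < r) (ha : a < lipAtScale u r x) :
    ∃ y ∈ ball x r, a < |u y - u x| / r := by
  have : Nonempty X := ⟨x⟩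
  obtain ⟨y, hy⟩ := exists_lt_of_lt_ciSup ha
  by_cases hyx : y ∈ ball x r
  · exact ⟨y, hyx, by rwa [ciSup_pos hyx] at hy⟩
  · rw [ciSup_neg hyx, Real.sSup_empty] at hy
    exact ⟨x, mem_ball_self hr, by simpa using hy⟩

theorem LipschitzWith.lipAtScale_le_div_mul (hu : LipschitzWith L u) (hs : 0 < s)
    (hsr : s ≤ r) :
    lipAtScale u s x ≤ r / s * lipAtScale u r x := by
  have hr := hs.trans_le hsr
  refine Real.iSup_le (fun y => Real.iSup_le (fun hy => ?_) ?_) ?_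
  · calc |u y - u x| / s = r / s * (|u y - u x| / r) := by field_simp
      _ ≤ r / s * lipAtScale u r x := by
        gcongr
        exact hu.abs_sub_div_le_lipAtScale hr (ball_subset_ball hsr hy)
  all_goals positivity [lipAtScale_nonneg (u := u) (x := x) hr.le]

theorem LipschitzWith.continuousWithinAt_lipAtScale_Iio (hu : LipschitzWith L u) (hr : 0 < r) :
    ContinuousWithinAt (lipAtScale u · x) (Iio r) r := by
  refine tendsto_order.2 ⟨fun a ha => ?_, fun b hb => ?_⟩
  · obtain ⟨y, hy, hay⟩ := exists_lt_abs_sub_div_of_lt_lipAtScale hr ha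
    filter_upwards [Ioo_mem_nhdsLT (mem_ball.mp hy)] with s ⟨hys, hsr⟩
    have hs : 0 < s := dist_nonneg.trans_lt hys
    calc a < |u y - u x| / r := hay
      _ ≤ |u y - u x| / s := div_le_div_of_nonneg_left (abs_nonneg _) hs hsr.le
      _ ≤ lipAtScale u s x := hu.abs_sub_div_le_lipAtScale hs hys
  · have hlim :
        Tendsto (fun s => r / s * lipAtScale u r x) (𝓝[<] r) (𝓝 (lipAtScale u r x)) := by
      have := ((tendsto_const_nhds (x := r)).div tendsto_id hr.ne').mul_const (lipAtScale u r x)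
      rw [div_self hr.ne', one_mul] at this
      exact this.mono_left nhdsWithin_le_nhds
    filter_upwards [hlim.eventually (gt_mem_nhds hb), Ioo_mem_nhdsLT hr] with s hs ⟨hs0, hsr⟩
    exact (hu.lipAtScale_le_div_mul hs0 hsr.le).trans_lt hs

theorem LipschitzWith.lowerSemicontinuous_lipAtScale (hu : LipschitzWith L u) (hr : 0 < r) :
    LowerSemicontinuous (lipAtScale u r) := by
  refine lowerSemicontinuous_ciSup (fun x => ⟨L, ?_⟩) fun y x a ha => ?_
  · rintro _ ⟨y, rfl⟩
    exact Real.iSup_le (hu.abs_sub_div_le hr) L.2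
  dsimp only at ha ⊢
  by_cases hyx : y ∈ ball x r
  · rw [ciSup_pos hyx] at ha
    have hcont : Continuous fun x' => |u y - u x'| / r :=
      ((continuous_const.sub hu.continuous).abs).div_const r
    filter_upwards [hcont.continuousAt.eventually (lt_mem_nhds ha),
      isOpen_ball.mem_nhds (mem_ball_comm.mp hyx)] with x' hax' hyx'
    rwa [ciSup_pos (mem_ball_comm.mp hyx')]
  · rw [ciSup_neg hyx, Real.sSup_empty] at ha
    exact .of_forall fun x' => ha.trans_le (Real.iSup_nonneg fun _ => by positivity)

theorem LipschitzWith.measurable_lipAtScale [MeasurableSpace X] [OpensMeasurableSpace X]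
    (hu : LipschitzWith L u) (r : ℝ) : Measurable (lipAtScale u r) := by
  rcases le_or_gt r 0 with hr | hr
  · rw [lipAtScale_of_nonpos hr]
    exact measurable_const
  · exact (hu.lowerSemicontinuous_lipAtScale hr).measurable

theorem isBoundedUnder_ge_lipAtScale (x : X) :
    IsBoundedUnder (· ≥ ·) (𝓝[>] 0) (lipAtScale u · x) :=
  ⟨0, eventually_map.2 (eventually_mem_nhdsWithin.mono fun _ hr => lipAtScale_nonneg hr.le)⟩

theorem LipschitzWith.isBoundedUnder_le_lipAtScale (hu : LipschitzWith L u) (x : X) :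
    IsBoundedUnder (· ≤ ·) (𝓝[>] 0) (lipAtScale u · x) :=
  ⟨L, eventually_map.2 (eventually_mem_nhdsWithin.mono fun _ hr => hu.lipAtScale_le hr)⟩

end LipAtScale

theorem lip_and_Lip_borel_measurable
    {X : Type*} [MetricSpace X] [MeasurableSpace X] [BorelSpace X]
    (u : X → ℝ) (hu : ∃ L : NNReal, LipschitzWith L u) :
    Measurable (lipLower u) ∧ Measurable (lipUpper u) := by
  obtain ⟨L, hu⟩ := hu
  have hmeas (q : ℚ) : Measurable (lipAtScale u q) := hu.measurable_lipAtScale q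
  have hleft (x : X) : ∀ r > 0, ContinuousWithinAt (lipAtScale u · x) (Iio r) r :=
    fun _ hr => hu.continuousWithinAt_lipAtScale_Iio hr
  constructor
  · convert Measurable.liminf_of_isCountablyGenerated (v := comap ((↑) : ℚ → ℝ) (𝓝[>] 0)) hmeas
      with x
    exact (liminf_comp_ratCast_nhdsGT_zero (hleft x)
      (hu.isBoundedUnder_le_lipAtScale x) (isBoundedUnder_ge_lipAtScale x)).symm
  · convert Measurable.limsup_of_isCountablyGenerated (v := comap ((↑) : ℚ → ℝ) (𝓝[>] 0)) hmeas
      with x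
    exact (limsup_comp_ratCast_nhdsGT_zero (hleft x)
      (hu.isBoundedUnder_le_lipAtScale x) (isBoundedUnder_ge_lipAtScale x)).symm
end
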